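/- The forgetful functor J : PT → T, which sends a planar rooted tree to its underlying rooted tree and forgets the planar structure, is essentially surjective and has property (F): for every rooted tree U, there exist finitely many planar rooted trees U_1, ..., U_e (the planar representations of U) such that every morphism in T from U to the underlying rooted tree of a planar rooted tree V factors as the image under J of a PT-morphism U_i → V. -/

import Mathlib

/-- A finite rooted tree, encoded as a finite partial order (the tree order,
with the root as maximum element) in which the set of elements above any
vertex is a chain (the path from the vertex to the root). -/
structure RTree where
  V : Type
  finite : Finite V
  le : V → V → Prop
  le_refl : ∀ v, le v v
  le_antisymm : ∀ v w, le v w → le w v → v = w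
  le_trans : ∀ u v w, le u v → le v w → le u w
  root : V
  le_root : ∀ v, le v root
  up_total : ∀ u v w, le u v → le u w → le v w ∨ le w v

/-- A morphism in the category `T`: an order embedding of vertex sets
(preserving and reflecting the tree order) which preserves the root. -/
structure TreeHom (T U : RTree) where
  toFun : T.V → U.V
  inj : Function.Injective toFun
  map_le : ∀ v w, T.le v w → U.le (toFun v) (toFun w)
  reflect_le : ∀ v w, U.le (toFun v) (toFun w) → T.le v w
  map_root : toFun T.root = U.root

def TreeHom.id (T : RTree) : TreeHom T T where
  toFun := fun v => v
  inj := fun _ _ h => h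
  map_le := fun _ _ h => h
  reflect_le := fun _ _ h => h
  map_root := rfl

def TreeHom.comp {T U W : RTree} (g : TreeHom U W) (f : TreeHom T U) :
    TreeHom T W where
  toFun := fun v => g.toFun (f.toFun v)
  inj := fun _ _ h => f.inj (g.inj h)
  map_le := fun v w h => g.map_le _ _ (f.map_le v w h)
  reflect_le := fun v w h => f.reflect_le _ _ (g.reflect_le _ _ h)
  map_root := by show g.toFun (f.toFun T.root) = W.root; rw [f.map_root, g.map_root]

/-- A planar rooted tree: a rooted tree together with its depth-first ordering,
a linear order on the vertices arising from the total orderings of the incoming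
edges at each vertex via a clockwise depth-first tree walk.  Such linear orders
are exactly those in which ancestors precede descendants and every principal
downset of the tree order is an interval. -/
structure PRTree extends RTree where
  dfle : V → V → Prop
  dfle_refl : ∀ v, dfle v v
  dfle_antisymm : ∀ v w, dfle v w → dfle w v → v = w
  dfle_trans : ∀ u v w, dfle u v → dfle v w → dfle u w
  dfle_total : ∀ v w, dfle v w ∨ dfle w v
  dfle_of_le : ∀ v w, le v w → dfle w v
  downset_interval : ∀ u a b c, le a u → le c u → dfle a b → dfle b c → le b u

/-- A morphism in the category `PT`: an order embedding of vertex sets which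
preserves the root and the depth-first ordering. -/
structure PTHom (T U : PRTree) where
  toFun : T.V → U.V
  inj : Function.Injective toFun
  map_le : ∀ v w, T.le v w → U.le (toFun v) (toFun w)
  reflect_le : ∀ v w, U.le (toFun v) (toFun w) → T.le v w
  map_root : toFun T.root = U.root
  map_dfle : ∀ v w, T.dfle v w → U.dfle (toFun v) (toFun w)

def PTHom.id (T : PRTree) : PTHom T T where
  toFun := fun v => v
  inj := fun _ _ h => h
  map_le := fun _ _ h => h
  reflect_le := fun _ _ h => h
  map_root := rfl
  map_dfle := fun _ _ h => h

def PTHom.comp {T U W : PRTree} (g : PTHom U W) (f : PTHom T U) :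
    PTHom T W where
  toFun := fun v => g.toFun (f.toFun v)
  inj := fun _ _ h => f.inj (g.inj h)
  map_le := fun v w h => g.map_le _ _ (f.map_le v w h)
  reflect_le := fun v w h => f.reflect_le _ _ (g.reflect_le _ _ h)
  map_root := by show g.toFun (f.toFun T.root) = W.root; rw [f.map_root, g.map_root]
  map_dfle := fun v w h => g.map_dfle _ _ (f.map_dfle v w h)

/-- The forgetful functor `J : PT → T` on morphisms. -/
def PTHom.forget {T U : PRTree} (f : PTHom T U) :
    TreeHom T.toRTree U.toRTree where
  toFun := f.toFun
  inj := f.inj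
  map_le := f.map_le
  reflect_le := f.reflect_le
  map_root := f.map_root


namespace ForgetAux

variable {U : RTree}

lemma up_cmp {a x y : U.V} (hx : U.le a x) (hy : U.le a y) :
    U.le x y ∨ U.le y x := U.up_total a x y hx hy

def tpo (U : RTree) : PartialOrder U.V where
  le := U.le
  le_refl := U.le_refl
  le_trans := U.le_trans
  le_antisymm := U.le_antisymm

lemma chain_max (S : Set U.V) (hne : S.Nonempty)
    (hchain : ∀ x ∈ S, ∀ y ∈ S, U.le x y ∨ U.le y x) :
    ∃ m ∈ S, ∀ x ∈ S, U.le x m := by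
  haveI : Finite U.V := U.finite
  letI := tpo U
  obtain ⟨m, hm, hmax⟩ := Set.Finite.exists_maximalFor id S (Set.toFinite S) hne
  refine ⟨m, hm, fun x hx => ?_⟩
  rcases hchain x hx m hm with h | h
  · exact h
  · obtain rfl : m = x := U.le_antisymm _ _ h (hmax hx h)
    exact U.le_refl m

lemma chain_min (S : Set U.V) (hne : S.Nonempty)
    (hchain : ∀ x ∈ S, ∀ y ∈ S, U.le x y ∨ U.le y x) :
    ∃ m ∈ S, ∀ x ∈ S, U.le m x := by
  haveI : Finite U.V := U.finite
  letI := tpo U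
  obtain ⟨m, hm, hmin⟩ := Set.Finite.exists_minimalFor id S (Set.toFinite S) hne
  refine ⟨m, hm, fun x hx => ?_⟩
  rcases hchain x hx m hm with h | h
  · obtain rfl : m = x := U.le_antisymm _ _ (hmin hx h) h
    exact U.le_refl m
  · exact h

/-- `m` is the least common ancestor of `v` and `w`. -/
def IsLca (U : RTree) (v w m : U.V) : Prop :=
  U.le v m ∧ U.le w m ∧ ∀ x, U.le v x → U.le w x → U.le m x

/-- `c` is the vertex just below `m` on the path from `v` up to `m`. -/
def IsChild (U : RTree) (m v c : U.V) : Prop :=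
  U.le v c ∧ U.le c m ∧ c ≠ m ∧ ∀ x, U.le v x → U.le x m → x ≠ m → U.le x c

lemma lca_exists (v w : U.V) : ∃ m, IsLca U v w m := by
  obtain ⟨m, hm, hmin⟩ := chain_min {x | U.le v x ∧ U.le w x}
    ⟨U.root, U.le_root v, U.le_root w⟩ (fun x hx y hy => up_cmp hx.1 hy.1)
  exact ⟨m, hm.1, hm.2, fun x h1 h2 => hmin x ⟨h1, h2⟩⟩

lemma lca_unique {v w m m' : U.V} (h : IsLca U v w m) (h' : IsLca U v w m') : m = m' :=
  U.le_antisymm _ _ (h.2.2 m' h'.1 h'.2.1) (h'.2.2 m h.1 h.2.1)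

lemma lca_symm {v w m : U.V} (h : IsLca U v w m) : IsLca U w v m :=
  ⟨h.2.1, h.1, fun x a b => h.2.2 x b a⟩

lemma ne_lca_left {v w m : U.V} (hwv : ¬ U.le w v) (h : IsLca U v w m) : v ≠ m := by
  rintro rfl; exact hwv h.2.1

lemma child_exists {v m : U.V} (hvm : U.le v m) (hne : v ≠ m) : ∃ c, IsChild U m v c := by
  obtain ⟨c, hc, hmax⟩ := chain_max {x | U.le v x ∧ U.le x m ∧ x ≠ m}
    ⟨v, U.le_refl v, hvm, hne⟩ (fun x hx y hy => up_cmp hx.1 hy.1)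
  exact ⟨c, hc.1, hc.2.1, hc.2.2, fun x h1 h2 h3 => hmax x ⟨h1, h2, h3⟩⟩

lemma child_unique {m v c c' : U.V} (h : IsChild U m v c) (h' : IsChild U m v c') : c = c' :=
  U.le_antisymm _ _ (h'.2.2.2 c h.1 h.2.1 h.2.2.1) (h.2.2.2 c' h'.1 h'.2.1 h'.2.2.1)

lemma child_congr {m a b ca cb : U.V} (hba : U.le b a)
    (hca : IsChild U m a ca) (hcb : IsChild U m b cb) : ca = cb := by
  have ham : U.le a m := U.le_trans _ _ _ hca.1 hca.2.1
  have hanem : a ≠ m := by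
    rintro rfl
    exact hca.2.2.1 (U.le_antisymm _ _ hca.2.1 hca.1)
  have hacb : U.le a cb := hcb.2.2.2 a hba ham hanem
  exact U.le_antisymm _ _
    (hcb.2.2.2 ca (U.le_trans _ _ _ hba hca.1) hca.2.1 hca.2.2.1)
    (hca.2.2.2 cb hacb hcb.2.1 hcb.2.2.1)

lemma children_not_comp {v w m cv cw : U.V} (_hvw : ¬ U.le v w) (_hwv : ¬ U.le w v)
    (hm : IsLca U v w m) (hcv : IsChild U m v cv) (hcw : IsChild U m w cw) :
    ¬ U.le cv cw ∧ ¬ U.le cw cv := by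
  constructor
  · intro h
    exact hcw.2.2.1 (U.le_antisymm _ _ hcw.2.1
      (hm.2.2 cw (U.le_trans _ _ _ hcv.1 h) hcw.1))
  · intro h
    exact hcv.2.2.1 (U.le_antisymm _ _ hcv.2.1
      (hm.2.2 cv hcv.1 (U.le_trans _ _ _ hcw.1 h)))

/-- The planarity tie-break relation between two incomparable vertices,
comparing the children of their least common ancestor via `ι`. -/
def PRel (U : RTree) (ι : U.V → ℕ) (v w : U.V) : Prop :=
  ∀ m cv cw, IsLca U v w m → IsChild U m v cv → IsChild U m w cw → ι cv < ι cw

lemma prel_iff {ι : U.V → ℕ} {v w m cv cw : U.V}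
    (hm : IsLca U v w m) (hcv : IsChild U m v cv) (hcw : IsChild U m w cw) :
    PRel U ι v w ↔ ι cv < ι cw := by
  constructor
  · exact fun h => h m cv cw hm hcv hcw
  · intro h m' cv' cw' hm' hcv' hcw'
    obtain rfl : m = m' := lca_unique hm hm'
    obtain rfl : cv = cv' := child_unique hcv hcv'
    obtain rfl : cw = cw' := child_unique hcw hcw'
    exact h

lemma incomp_data {v w : U.V} (hvw : ¬ U.le v w) (hwv : ¬ U.le w v) :
    ∃ m cv cw, IsLca U v w m ∧ IsChild U m v cv ∧ IsChild U m w cw := by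
  obtain ⟨m, hm⟩ := lca_exists v w
  obtain ⟨cv, hcv⟩ := child_exists hm.1 (ne_lca_left hwv hm)
  obtain ⟨cw, hcw⟩ := child_exists hm.2.1 (ne_lca_left hvw (lca_symm hm))
  exact ⟨m, cv, cw, hm, hcv, hcw⟩

end ForgetAux

open ForgetAux in
/-- The conditions on a relation `d` making `(U, d)` a planar rooted tree. -/
def PlanarAxioms (U : RTree) (d : U.V → U.V → Prop) : Prop :=
  (∀ v, d v v) ∧ (∀ v w, d v w → d w v → v = w) ∧
  (∀ u v w, d u v → d v w → d u w) ∧ (∀ v w, d v w ∨ d w v) ∧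
  (∀ v w, U.le v w → d w v) ∧
  (∀ u a b c, U.le a u → U.le c u → d a b → d b c → U.le b u)

open ForgetAux in
theorem exists_planar (U : RTree) : ∃ d, PlanarAxioms U d := by
  classical
  haveI : Finite U.V := U.finite
  haveI : Countable U.V := Finite.to_countable
  obtain ⟨ι, hι⟩ := exists_injective_nat U.V
  refine ⟨fun v w => U.le w v ∨ (¬ U.le v w ∧ ¬ U.le w v ∧ PRel U ι v w),
    fun v => Or.inl (U.le_refl v), ?_, ?_, ?_, fun v w h => Or.inl h, ?_⟩
  · -- antisymmetry
    intro v w h1 h2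
    rcases h1 with h1 | ⟨hvw, hwv, hP⟩
    · rcases h2 with h2 | ⟨hwv', hvw', _⟩
      · exact U.le_antisymm v w h2 h1
      · exact absurd h1 hwv'
    · rcases h2 with h2 | ⟨hwv', hvw', hP'⟩
      · exact absurd h2 hvw
      · obtain ⟨m, cv, cw, hm, hcv, hcw⟩ := incomp_data hvw hwv
        have l1 := hP m cv cw hm hcv hcw
        have l2 := hP' m cw cv (lca_symm hm) hcw hcv
        omega
  · -- transitivity
    intro a b c h1 h2
    rcases h1 with h1 | ⟨hab, hba, hP1⟩
    · rcases h2 with h2 | ⟨hbc, hcb, hP2⟩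
      · exact Or.inl (U.le_trans _ _ _ h2 h1)
      · -- b ≤ a, b ∥ c
        obtain ⟨m, cb, cc, hm, hcb, hcc⟩ := incomp_data hbc hcb
        rcases up_cmp h1 hm.1 with ham | hma
        · by_cases haem : a = m
          · subst haem; exact Or.inl hm.2.1
          · have hac : ¬ U.le a c := fun h => hbc (U.le_trans _ _ _ h1 h)
            have hca : ¬ U.le c a := fun h =>
              haem (U.le_antisymm _ _ ham (hm.2.2 a h1 h))
            have hm' : IsLca U a c m :=
              ⟨ham, hm.2.1, fun x hax hcx => hm.2.2 x (U.le_trans _ _ _ h1 hax) hcx⟩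
            obtain ⟨ca, hca'⟩ := child_exists ham haem
            have hcacb : ca = cb := child_congr h1 hca' hcb
            refine Or.inr ⟨hac, hca, (prel_iff hm' hca' hcc).2 ?_⟩
            rw [hcacb]; exact hP2 m cb cc hm hcb hcc
        · exact Or.inl (U.le_trans _ _ _ hm.2.1 hma)
    · rcases h2 with h2 | ⟨hbc, hcb, hP2⟩
      · -- a ∥ b, c ≤ b
        obtain ⟨m, ca, cb, hm, hca, hcb⟩ := incomp_data hab hba
        have hac : ¬ U.le a c := fun h => hab (U.le_trans _ _ _ h h2)
        have hca2 : ¬ U.le c a := by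
          intro h
          rcases up_cmp h h2 with h' | h'
          · exact hab h'
          · exact hba h'
        have hm' : IsLca U a c m := by
          refine ⟨hm.1, U.le_trans _ _ _ h2 hm.2.1, fun x hax hcx => ?_⟩
          rcases up_cmp hcx h2 with h' | h'
          · exact absurd (U.le_trans _ _ _ hax h') hab
          · exact hm.2.2 x hax h'
        obtain ⟨cc, hcc⟩ := child_exists hm'.2.1 (ne_lca_left hac (lca_symm hm'))
        have hcbcc : cb = cc := child_congr h2 hcb hcc
        refine Or.inr ⟨hac, hca2, (prel_iff hm' hca hcc).2 ?_⟩
        rw [← hcbcc]; exact hP1 m ca cb hm hca hcb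
      · -- a ∥ b, b ∥ c
        obtain ⟨m1, ca, cb1, hm1, hca, hcb1⟩ := incomp_data hab hba
        obtain ⟨m2, cb2, cc, hm2, hcb2, hcc⟩ := incomp_data hbc hcb
        by_cases hmm : m1 = m2
        · subst hmm
          obtain rfl : cb1 = cb2 := child_unique hcb1 hcb2
          have hlt1 : ι ca < ι cb1 := hP1 m1 ca cb1 hm1 hca hcb1
          have hlt2 : ι cb1 < ι cc := hP2 m1 cb1 cc hm2 hcb2 hcc
          have hkey : ∀ x, U.le x ca → U.le x cc → False := by
            intro x hxa hxc
            rcases up_cmp hxa hxc with h' | h'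
            · have hh : U.le cc ca :=
                hca.2.2.2 cc (U.le_trans _ _ _ hca.1 h') hcc.2.1 hcc.2.2.1
              have heq : ca = cc := U.le_antisymm _ _ h' hh
              rw [heq] at hlt1; omega
            · have hh : U.le ca cc :=
                hcc.2.2.2 ca (U.le_trans _ _ _ hcc.1 h') hca.2.1 hca.2.2.1
              have heq : ca = cc := U.le_antisymm _ _ hh h'
              rw [heq] at hlt1; omega
          have hac : ¬ U.le a c := fun h => hkey a hca.1 (U.le_trans _ _ _ h hcc.1)
          have hca2 : ¬ U.le c a := fun h => hkey c (U.le_trans _ _ _ h hca.1) hcc.1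
          have hm' : IsLca U a c m1 := by
            refine ⟨hm1.1, hm2.2.1, fun x hax hcx => ?_⟩
            rcases up_cmp hax hca.1 with h' | h'
            · exact absurd (hkey c (U.le_trans _ _ _ hcx h') hcc.1) not_false
            · rcases up_cmp hax hm1.1 with h'' | h''
              · by_cases hxm : x = m1
                · subst hxm; exact U.le_refl x
                · have hx1 : U.le x ca := hca.2.2.2 x hax h'' hxm
                  have hx2 : x = ca := U.le_antisymm _ _ hx1 h'
                  exact absurd (hkey c (hx2 ▸ hcx) hcc.1) not_false
              · exact h''
          exact Or.inr ⟨hac, hca2, (prel_iff hm' hca hcc).2 (by omega)⟩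
        · rcases up_cmp hm1.2.1 hm2.1 with h12 | h21
          · -- m1 < m2
            obtain ⟨k, hk⟩ := child_exists h12 hmm
            have hkb : k = cb2 := child_congr hm1.2.1 hk hcb2
            have hac : ¬ U.le a c := by
              intro h
              rcases up_cmp h hm1.1 with h' | h'
              · exact hmm (U.le_antisymm _ _ h12 (hm2.2.2 m1 hm1.2.1 h'))
              · exact hbc (U.le_trans _ _ _ hm1.2.1 h')
            have hca2 : ¬ U.le c a := fun h =>
              hmm (U.le_antisymm _ _ h12
                (hm2.2.2 m1 hm1.2.1 (U.le_trans _ _ _ h hm1.1)))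
            have hm' : IsLca U a c m2 := by
              refine ⟨U.le_trans _ _ _ hm1.1 h12, hm2.2.1, fun x hax hcx => ?_⟩
              rcases up_cmp hax hm1.1 with h' | h'
              · exact absurd (U.le_antisymm _ _ h12
                  (hm2.2.2 m1 hm1.2.1 (U.le_trans _ _ _ hcx h'))) hmm
              · exact hm2.2.2 x (U.le_trans _ _ _ hm1.2.1 h') hcx
            obtain ⟨ca', hca'⟩ := child_exists hm'.1 (ne_lca_left hca2 hm')
            have hcak : k = ca' := child_congr hm1.1 hk hca'
            refine Or.inr ⟨hac, hca2, (prel_iff hm' hca' hcc).2 ?_⟩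
            rw [← hcak, hkb]; exact hP2 m2 cb2 cc hm2 hcb2 hcc
          · -- m2 < m1
            obtain ⟨k, hk⟩ := child_exists h21 (Ne.symm hmm)
            have hkb : k = cb1 := child_congr hm2.1 hk hcb1
            have hac : ¬ U.le a c := fun h =>
              hmm (U.le_antisymm _ _
                (hm1.2.2 m2 (U.le_trans _ _ _ h hm2.2.1) hm2.1) h21)
            have hca2 : ¬ U.le c a := by
              intro h
              rcases up_cmp h hm2.2.1 with h' | h'
              · exact hmm (U.le_antisymm _ _ (hm1.2.2 m2 h' hm2.1) h21)
              · exact hba (U.le_trans _ _ _ hm2.1 h')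
            have hm' : IsLca U a c m1 := by
              refine ⟨hm1.1, U.le_trans _ _ _ hm2.2.1 h21, fun x hax hcx => ?_⟩
              rcases up_cmp hcx hm2.2.1 with h' | h'
              · exact absurd (U.le_antisymm _ _
                  (hm1.2.2 m2 (U.le_trans _ _ _ hax h') hm2.1) h21) hmm
              · exact hm1.2.2 x hax (U.le_trans _ _ _ hm2.1 h')
            obtain ⟨cc', hcc'⟩ := child_exists hm'.2.1 (ne_lca_left hac (lca_symm hm'))
            have hcck : k = cc' := child_congr hm2.2.1 hk hcc'
            refine Or.inr ⟨hac, hca2, (prel_iff hm' hca hcc').2 ?_⟩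
            rw [← hcck, hkb]; exact hP1 m1 ca cb1 hm1 hca hcb1
  · -- totality
    intro v w
    by_cases hwv : U.le w v
    · exact Or.inl (Or.inl hwv)
    by_cases hvw : U.le v w
    · exact Or.inr (Or.inl hvw)
    obtain ⟨m, cv, cw, hm, hcv, hcw⟩ := incomp_data hvw hwv
    have hne : cv ≠ cw := fun h =>
      (children_not_comp hvw hwv hm hcv hcw).1 (by rw [h]; exact U.le_refl cw)
    have hne' : ι cv ≠ ι cw := fun h => hne (hι h)
    rcases Nat.lt_or_ge (ι cv) (ι cw) with h | h
    · exact Or.inl (Or.inr ⟨hvw, hwv, (prel_iff hm hcv hcw).2 h⟩)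
    · exact Or.inr (Or.inr ⟨hwv, hvw,
        (prel_iff (lca_symm hm) hcw hcv).2 (by omega)⟩)
  · -- downsets are intervals
    intro u a b c hau hcu h1 h2
    rcases h1 with h1 | ⟨hab, hba, hP1⟩
    · exact U.le_trans _ _ _ h1 hau
    · rcases h2 with h2 | ⟨hbc, hcb, hP2⟩
      · rcases up_cmp hcu h2 with h' | h'
        · exact absurd (U.le_trans _ _ _ hau h') hab
        · exact h'
      · obtain ⟨m1, ca, cb1, hm1, hca, hcb1⟩ := incomp_data hab hba
        obtain ⟨m2, cb2, cc, hm2, hcb2, hcc⟩ := incomp_data hbc hcb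
        rcases up_cmp hau hm1.1 with h' | h'
        · by_cases hum : u = m1
          · subst hum; exact hm1.2.1
          · exfalso
            have huca : U.le u ca := hca.2.2.2 u hau h' hum
            have hcca : U.le c ca := U.le_trans _ _ _ hcu huca
            rcases up_cmp hm2.2.1 hcca with hx | hx
            · have h3 : U.le b ca := U.le_trans _ _ _ hm2.1 hx
              rcases up_cmp h3 hcb1.1 with h4 | h4
              · exact (children_not_comp hab hba hm1 hca hcb1).1 h4
              · exact (children_not_comp hab hba hm1 hca hcb1).2 h4
            · have h5 : U.le m1 m2 := hm1.2.2 m2 (U.le_trans _ _ _ hca.1 hx) hm2.1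
              by_cases hmm : m1 = m2
              · subst hmm
                have h6 : U.le ca cc := hcc.2.2.2 ca hcca hca.2.1 hca.2.2.1
                have h7 : U.le cc ca :=
                  hca.2.2.2 cc (U.le_trans _ _ _ hca.1 h6) hcc.2.1 hcc.2.2.1
                have h8 : cc = ca := U.le_antisymm _ _ h7 h6
                have h9 : cb1 = cb2 := child_unique hcb1 hcb2
                have l1 := hP1 m1 ca cb1 hm1 hca hcb1
                have l2 := hP2 m1 cb2 cc hm2 hcb2 hcc
                rw [h8, ← h9] at l2; omega
              · obtain ⟨k, hk⟩ := child_exists h5 hmm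
                have e1 : k = cb2 := child_congr hm1.2.1 hk hcb2
                have e2 : k = cc :=
                  child_congr (U.le_trans _ _ _ hcca hca.2.1) hk hcc
                have l2 := hP2 m2 cb2 cc hm2 hcb2 hcc
                rw [← e1, ← e2] at l2; omega
        · exact U.le_trans _ _ _ hm1.2.1 h'

/-- Build a planar rooted tree from a rooted tree and a relation satisfying
the planarity axioms. -/
def mkP (U : RTree) (d : U.V → U.V → Prop) (h : PlanarAxioms U d) : PRTree where
  toRTree := U
  dfle := d
  dfle_refl := h.1
  dfle_antisymm := h.2.1
  dfle_trans := h.2.2.1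
  dfle_total := h.2.2.2.1
  dfle_of_le := h.2.2.2.2.1
  downset_interval := h.2.2.2.2.2

theorem TreeHom.ext' {T U : RTree} {f g : TreeHom T U} (h : f.toFun = g.toFun) :
    f = g := by
  cases f; cases g; cases h; rfl

/-- The forgetful functor `J : PT → T` is essentially surjective and has
property (F): for every rooted tree `U` there are finitely many planar rooted
trees `U₁, …, Uₑ` and `T`-morphisms `U → J(Uᵢ)` through which every
`T`-morphism from `U` to the underlying rooted tree of a planar rooted tree
factors, via the image under `J` of a `PT`-morphism. -/
theorem forget_ess_surj_and_property_F :
    (∀ U : RTree, ∃ (P : PRTree) (f : TreeHom U P.toRTree)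
        (g : TreeHom P.toRTree U),
        TreeHom.comp g f = TreeHom.id U ∧
        TreeHom.comp f g = TreeHom.id P.toRTree) ∧
    (∀ U : RTree, ∃ (m : ℕ) (y : Fin m → PRTree)
        (f : ∀ i, TreeHom U (y i).toRTree),
        ∀ (P : PRTree) (φ : TreeHom U P.toRTree),
          ∃ (i : Fin m) (g : PTHom (y i) P),
            φ = TreeHom.comp g.forget (f i)) := by
  classical
  constructor
  · intro U
    obtain ⟨d, h⟩ := exists_planar U
    exact ⟨mkP U d h, TreeHom.id U, TreeHom.id U, TreeHom.ext' rfl, TreeHom.ext' rfl⟩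
  · intro U
    haveI : Finite U.V := U.finite
    obtain ⟨n, ⟨e⟩⟩ := Finite.exists_equiv_fin {p : U.V → U.V → Prop // PlanarAxioms U p}
    refine ⟨n, fun i => mkP U (e.symm i).1 (e.symm i).2, fun _ => TreeHom.id U, ?_⟩
    intro P φ
    set d' : U.V → U.V → Prop := fun v w => P.dfle (φ.toFun v) (φ.toFun w) with hd'
    have hax : PlanarAxioms U d' := by
      refine ⟨fun v => P.dfle_refl _,
        fun v w h1 h2 => φ.inj (P.dfle_antisymm _ _ h1 h2),
        fun u v w h1 h2 => P.dfle_trans _ _ _ h1 h2,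
        fun v w => P.dfle_total _ _,
        fun v w h => P.dfle_of_le _ _ (φ.map_le _ _ h),
        fun u a b c hau hcu h1 h2 => ?_⟩
      exact φ.reflect_le _ _
        (P.downset_interval _ _ _ _ (φ.map_le _ _ hau) (φ.map_le _ _ hcu) h1 h2)
    refine ⟨e ⟨d', hax⟩, ?_⟩
    have h1 : (e.symm (e ⟨d', hax⟩)).1 = d' := by rw [e.symm_apply_apply]
    exact ⟨{ toFun := φ.toFun, inj := φ.inj, map_le := φ.map_le,
             reflect_le := φ.reflect_le, map_root := φ.map_root,
             map_dfle := fun v w h => by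
               have h' : (e.symm (e ⟨d', hax⟩)).1 v w := h
               rw [h1] at h'
               exact h' }, TreeHom.ext' rfl⟩
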